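/- arXiv:1702.07815 — 2 statements merged into one kernel-verified Lean document; each statement's English description precedes it below -/
import Mathlib

section
/- Let G be a directed graph with real arc lengths and no negative cycle, with unique shortest paths between every pair of vertices. Let S be a generic, independent set of weighted sites. For each site s ∈ S and every vertex x in the graphic Voronoi cell of s, every vertex on the shortest path from s to x also lies in the graphic Voronoi cell of s. -/
inductive DWalk {V : Type*} (A : V → V → Prop) : V → V → Type _ where
  | nil : (v : V) → DWalk A v v
  | cons : {u v w : V} → A u v → DWalk A v w → DWalk A u w

def DWalk.len {V : Type*} {A : V → V → Prop} (f : V → V → ℝ) :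
    ∀ {u w : V}, DWalk A u w → ℝ
  | _, _, .nil _ => 0
  | u, _, .cons (v := v) _ p => f u v + DWalk.len f p

def DWalk.support {V : Type*} {A : V → V → Prop} :
    ∀ {u w : V}, DWalk A u w → List V
  | u, _, .nil _ => [u]
  | u, _, .cons _ p => u :: DWalk.support p

def DWalk.lastArc {V : Type*} {A : V → V → Prop} :
    ∀ {u w : V}, DWalk A u w → Option (V × V)
  | _, _, .nil _ => none
  | u, _, .cons (v := v) _ p =>
      match DWalk.lastArc p with
      | none => some (u, v)
      | some pr => some pr

/-- Shortest-path distance: infimum of lengths of walks. -/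
noncomputable def ddist {V : Type*} (A : V → V → Prop) (f : V → V → ℝ) (s t : V) : ℝ :=
  sInf {x : ℝ | ∃ p : DWalk A s t, DWalk.len f p = x}


/-- The graphic Voronoi cell of a weighted site `s` with respect to a set of
weighted sites `S`. -/
def vorCell {V : Type*} (A : V → V → Prop) (f : V → V → ℝ)
    (S : Finset (V × ℝ)) (s : V × ℝ) : Set V :=
  {x | ∀ t ∈ S, t ≠ s → s.2 + ddist A f s.1 x ≤ t.2 + ddist A f t.1 x}

/-! A prefix of a shortest path is itself shortest: if `y` lies on the shortest path from `s` to
`x`, then `d(s, y) + d(y, x) = d(s, x)`. For a rival site `t`, the triangle inequality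
`d(t, x) ≤ d(t, y) + d(y, x)` then transfers `w_s + d(s, x) ≤ w_t + d(t, x)` from `x` back to
`y`, after subtracting `d(y, x)` on both sides.

Finiteness of the graph and the absence of negative cycles only serve to make `ddist`, an
infimum of reals, a genuine lower bound on walk lengths: every walk can be shortened to a path,
and paths have at most `card V` vertices. -/

namespace DWalk

variable {V : Type*} {A : V → V → Prop} (f : V → V → ℝ)

def append : ∀ {u v w : V}, DWalk A u v → DWalk A v w → DWalk A u w
  | _, _, _, .nil _, q => q
  | _, _, _, .cons a p, q => .cons a (p.append q)

lemma len_append : ∀ {u v w : V} (p : DWalk A u v) (q : DWalk A v w),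
    (p.append q).len f = p.len f + q.len f
  | _, _, _, .nil _, q => by simp [append, len]
  | _, _, _, .cons a p, q => by
      simp only [append, len, len_append p q]
      ring

lemma exists_split_of_mem_support : ∀ {u w : V} (p : DWalk A u w) {y : V},
    y ∈ p.support → ∃ (q₁ : DWalk A u y) (q₂ : DWalk A y w),
      q₁.len f + q₂.len f = p.len f ∧ q₂.support <:+ p.support
  | _, _, .nil v, y, hy => by
      obtain rfl : y = v := by simpa [support] using hy
      exact ⟨.nil y, .nil y, by simp [len], List.suffix_refl _⟩
  | u, _, .cons a p, y, hy => by
      rcases List.mem_cons.mp hy with rfl | hy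
      · exact ⟨.nil y, .cons a p, by simp [len], List.suffix_refl _⟩
      · obtain ⟨q₁, q₂, hlen, hsuf⟩ := exists_split_of_mem_support p hy
        refine ⟨.cons a q₁, q₂, ?_, hsuf.trans (List.suffix_cons u _)⟩
        simp only [len]
        linarith

variable {f}

lemma exists_support_nodup_len_le (hNoNeg : ∀ (v : V) (c : DWalk A v v), 0 ≤ c.len f) :
    ∀ {u w : V} (p : DWalk A u w), ∃ q : DWalk A u w, q.support.Nodup ∧ q.len f ≤ p.len f
  | _, _, .nil v => ⟨.nil v, by simp [support], le_rfl⟩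
  | u, _, .cons a p => by
      obtain ⟨q, hq, hqp⟩ := exists_support_nodup_len_le hNoNeg p
      by_cases hu : u ∈ q.support
      · -- cut out the cycle through `u`, which has nonnegative length
        obtain ⟨q₁, q₂, hlen, hsuf⟩ := exists_split_of_mem_support f q hu
        have hcycle := hNoNeg u (.cons a q₁)
        simp only [len] at hcycle ⊢
        exact ⟨q₂, hq.sublist hsuf.sublist, by linarith⟩
      · exact ⟨.cons a q, List.nodup_cons.mpr ⟨hu, hq⟩, by simp only [len]; linarith⟩

lemma length_support_mul_le_len {m : ℝ} (hm : ∀ u v, m ≤ f u v) (hm₀ : m ≤ 0) :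
    ∀ {u w : V} (p : DWalk A u w), p.support.length * m ≤ p.len f
  | _, _, .nil v => by simp [support, len, hm₀]
  | u, _, .cons (v := v) a p => by
      have ih := length_support_mul_le_len hm hm₀ p
      simp only [support, len, List.length_cons, Nat.cast_succ]
      linarith [hm u v]

end DWalk

section ddist

variable {V : Type*} {A : V → V → Prop} {f : V → V → ℝ}

lemma bddBelow_len [Fintype V] (hNoNeg : ∀ (v : V) (c : DWalk A v v), 0 ≤ c.len f) (a b : V) :
    BddBelow {x : ℝ | ∃ p : DWalk A a b, p.len f = x} := by
  obtain ⟨m, hm⟩ := (Set.finite_range (Function.uncurry f)).bddBelow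
  have hm' : ∀ u v, min m 0 ≤ f u v := fun u v =>
    (min_le_left m 0).trans (hm ⟨(u, v), rfl⟩)
  refine ⟨Fintype.card V * min m 0, ?_⟩
  rintro _ ⟨p, rfl⟩
  obtain ⟨q, hq, hqp⟩ := DWalk.exists_support_nodup_len_le hNoNeg p
  calc (Fintype.card V : ℝ) * min m 0 ≤ q.support.length * min m 0 :=
        mul_le_mul_of_nonpos_right (mod_cast hq.length_le_card) (min_le_right m 0)
    _ ≤ q.len f := DWalk.length_support_mul_le_len hm' (min_le_right m 0) q
    _ ≤ p.len f := hqp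

variable [Fintype V] (hNoNeg : ∀ (v : V) (c : DWalk A v v), 0 ≤ c.len f)
include hNoNeg

lemma ddist_le_len {a b : V} (p : DWalk A a b) : ddist A f a b ≤ p.len f :=
  csInf_le (bddBelow_len hNoNeg a b) ⟨p, rfl⟩

lemma ddist_add_ddist_le_len {a b y : V} (p : DWalk A a b) (hy : y ∈ p.support) :
    ddist A f a y + ddist A f y b ≤ p.len f := by
  obtain ⟨q₁, q₂, hlen, -⟩ := DWalk.exists_split_of_mem_support f p hy
  rw [← hlen]
  exact add_le_add (ddist_le_len hNoNeg q₁) (ddist_le_len hNoNeg q₂)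

lemma ddist_triangle (hshort : ∀ a b : V, ∃ p : DWalk A a b, p.len f = ddist A f a b)
    (a b c : V) : ddist A f a c ≤ ddist A f a b + ddist A f b c := by
  obtain ⟨p, hp⟩ := hshort a b
  obtain ⟨q, hq⟩ := hshort b c
  simpa only [DWalk.len_append, hp, hq] using ddist_le_len hNoNeg (p.append q)

end ddist

lemma mem_vorCell_of_ddist_add_ddist_le {V : Type*} {A : V → V → Prop} {f : V → V → ℝ}
    (htri : ∀ a b c : V, ddist A f a c ≤ ddist A f a b + ddist A f b c)
    {S : Finset (V × ℝ)} {s : V × ℝ} {x y : V} (hx : x ∈ vorCell A f S s)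
    (hy : ddist A f s.1 y + ddist A f y x ≤ ddist A f s.1 x) :
    y ∈ vorCell A f S s := fun t ht hts => by
  linarith [hx t ht hts, htri t.1 y x]

theorem stmt5_general {V : Type*} [Fintype V] (A : V → V → Prop) (lam : V → V → ℝ)
    (hNoNeg : ∀ (v : V) (c : DWalk A v v), 0 ≤ DWalk.len lam c)
    (huniq : ∀ a b : V, ∃! p : {q : DWalk A a b // (DWalk.support q).Nodup},
      DWalk.len lam p.1 = ddist A lam a b)
    (S : Finset (V × ℝ))
    (s : V × ℝ) (x : V) (hx : x ∈ vorCell A lam S s)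
    (p : DWalk A s.1 x)
    (hlen : DWalk.len lam p = ddist A lam s.1 x) :
    ∀ y ∈ DWalk.support p, y ∈ vorCell A lam S s := by
  have hshort : ∀ a b : V, ∃ q : DWalk A a b, q.len lam = ddist A lam a b := fun a b =>
    let ⟨q, hq, _⟩ := huniq a b
    ⟨q.1, hq⟩
  intro y hy
  exact mem_vorCell_of_ddist_add_ddist_le (ddist_triangle hNoNeg hshort) hx
    (hlen ▸ ddist_add_ddist_le_len hNoNeg p hy)

/-- for a generic, independent set of sites, every vertex on the
(unique) shortest path from a site to a vertex of its cell lies in the cell. -/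
theorem stmt5 {V : Type*} [Fintype V] (A : V → V → Prop) (lam : V → V → ℝ)
    (hNoNeg : ∀ (v : V) (c : DWalk A v v), 0 ≤ DWalk.len lam c)
    (huniq : ∀ a b : V, ∃! p : {q : DWalk A a b // (DWalk.support q).Nodup},
      DWalk.len lam p.1 = ddist A lam a b)
    (S : Finset (V × ℝ))
    (hgen : ∀ x : V, ∀ s ∈ S, ∀ t ∈ S, s ≠ t →
      s.2 + ddist A lam s.1 x ≠ t.2 + ddist A lam t.1 x)
    (hind : ∀ s ∈ S, (vorCell A lam S s).Nonempty)
    (s : V × ℝ) (hs : s ∈ S) (x : V) (hx : x ∈ vorCell A lam S s)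
    (p : DWalk A s.1 x) (hp : (DWalk.support p).Nodup)
    (hlen : DWalk.len lam p = ddist A lam s.1 x) :
    ∀ y ∈ DWalk.support p, y ∈ vorCell A lam S s :=
  stmt5_general A lam hNoNeg huniq S s x hx p hlen
end

section
/- Let G, x₀, Y, λ and G⁺(Y) be as above with the condition λ(x₀,y) < λ(x₀,y') + d_G(y',y) for distinct y,y' ∈ Y, and assume the sites S_Y = {(y,λ(x₀,y)) : y ∈ Y} are generic. Then for any finite set U of vertices of G, the sum over u ∈ U of d_{G⁺(Y)}(x₀,u) equals the sum over y ∈ Y of ( λ(x₀,y)·|cell_G(s_y,S_Y) ∩ U| + sum over u ∈ cell_G(s_y,S_Y) ∩ U of d_G(y,u) ). -/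
/-- The arc relation of `G⁺(Y)`: the new vertex `x₀` is modelled as `none`,
the vertices of `G` as `some v`; arcs go from `x₀` to each `y ∈ Y`. -/
def Aplus {V : Type*} (A : V → V → Prop) (Y : Set V) :
    Option V → Option V → Prop
  | some u, some v => A u v
  | none, some y => y ∈ Y
  | _, _ => False

/-- Arc lengths in `G⁺(Y)`: `lamb y` on the new arc `(x₀, y)`. -/
def lamplus {V : Type*} (lam : V → V → ℝ) (lamb : V → ℝ) :
    Option V → Option V → ℝ
  | some u, some v => lam u v
  | none, some y => lamb y
  | _, _ => 0


/-- The graphic Voronoi cell of the site `s_y = (y, lamb y)` with respect to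
the sites `S_Y = {(y, lamb y) : y ∈ Y}`. -/
def cellY {V : Type*} (A : V → V → Prop) (lam : V → V → ℝ)
    (Y : Finset V) (lamb : V → ℝ) (y : V) : Set V :=
  {x | ∀ y' ∈ Y, y' ≠ y →
    lamb y + ddist A lam y x ≤ lamb y' + ddist A lam y' x}

/-!
Every walk in `G⁺(Y)` from `x₀` to a vertex `u` of `G` is an arc `(x₀, y)`, `y ∈ Y`, followed
by a walk of `G`, so `d_{G⁺(Y)}(x₀, u) = min_{y ∈ Y} (λ(x₀, y) + d_G(y, u))`. The minimum is
attained exactly at the `y` whose cell contains `u`, and by genericity that `y` is unique; so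
the cells partition `U`, and regrouping the sum over `U` by cells gives the identity.
The distances are honest infima, of sets of walk lengths bounded below, because without
negative cycles every walk can be shortened to one without repeated vertices.
-/

section Walks

variable {V : Type*} {A : V → V → Prop} {f : V → V → ℝ}

lemma DWalk.exists_split_of_mem_support_s14 :
    ∀ {u w : V} (p : DWalk A u w) {x : V}, x ∈ p.support →
      ∃ (q : DWalk A u x) (r : DWalk A x w),
        q.len f + r.len f = p.len f ∧ r.support <:+ p.support
  | _, _, .nil _, x, hx => by
      obtain rfl := List.mem_singleton.mp hx
      exact ⟨.nil _, .nil _, by simp [DWalk.len], List.suffix_refl _⟩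
  | _, _, .cons h p, x, hx => by
      rcases List.mem_cons.mp hx with rfl | hx
      · exact ⟨.nil _, .cons h p, by simp [DWalk.len], List.suffix_refl _⟩
      · obtain ⟨q, r, hlen, hsuf⟩ := p.exists_split_of_mem_support_s14 hx
        refine ⟨.cons h q, r, ?_, hsuf.trans (List.suffix_cons _ _)⟩
        simp only [DWalk.len] at hlen ⊢
        linarith

lemma DWalk.exists_nodup_len_le (hNoNeg : ∀ (v : V) (c : DWalk A v v), 0 ≤ c.len f) :
    ∀ {u w : V} (p : DWalk A u w), ∃ q : DWalk A u w, q.support.Nodup ∧ q.len f ≤ p.len f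
  | _, _, .nil v => ⟨.nil v, List.nodup_singleton v, le_rfl⟩
  | u, _, .cons h p => by
      obtain ⟨q, hnd, hle⟩ := DWalk.exists_nodup_len_le hNoNeg p
      by_cases hu : u ∈ q.support
      · -- cut off the cycle `u → ⋯ → u`, which has nonnegative length
        obtain ⟨q₁, r, hlen, hsuf⟩ := q.exists_split_of_mem_support_s14 (f := f) hu
        refine ⟨r, hnd.sublist hsuf.sublist, ?_⟩
        have hcyc := hNoNeg u (.cons h q₁)
        simp only [DWalk.len] at hcyc ⊢
        linarith
      · refine ⟨.cons h q, List.nodup_cons.mpr ⟨hu, hnd⟩, ?_⟩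
        simp only [DWalk.len]
        linarith

lemma DWalk.length_support_mul_le_len_s14 {c : ℝ} (hc : c ≤ 0) (hf : ∀ a b, c ≤ f a b) :
    ∀ {u w : V} (p : DWalk A u w), (p.support.length : ℝ) * c ≤ p.len f
  | _, _, .nil _ => by simpa [DWalk.support, DWalk.len] using hc
  | u, _, .cons (v := v) _ p => by
      have := p.length_support_mul_le_len_s14 hc hf
      simp only [DWalk.support, DWalk.len, List.length_cons, Nat.cast_succ]
      linarith [hf u v]

lemma ddist_bddBelow [Finite V] (hNoNeg : ∀ (v : V) (c : DWalk A v v), 0 ≤ c.len f)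
    (s t : V) : BddBelow {x : ℝ | ∃ p : DWalk A s t, p.len f = x} := by
  have := Fintype.ofFinite V
  obtain ⟨m, hm⟩ := (Set.finite_range fun e : V × V => f e.1 e.2).bddBelow
  have hf : ∀ a b, min m 0 ≤ f a b := fun a b => (min_le_left _ _).trans (hm ⟨(a, b), rfl⟩)
  refine ⟨Fintype.card V * min m 0, ?_⟩
  rintro _ ⟨p, rfl⟩
  obtain ⟨q, hnd, hle⟩ := DWalk.exists_nodup_len_le hNoNeg p
  have hcard : (q.support.length : ℝ) ≤ Fintype.card V := by exact_mod_cast hnd.length_le_card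
  calc (Fintype.card V : ℝ) * min m 0
      ≤ q.support.length * min m 0 := mul_le_mul_of_nonpos_right hcard (min_le_right _ _)
    _ ≤ q.len f := q.length_support_mul_le_len_s14 (min_le_right _ _) hf
    _ ≤ p.len f := hle

lemma ddist_le_len_s14 [Finite V] (hNoNeg : ∀ (v : V) (c : DWalk A v v), 0 ≤ c.len f)
    {s t : V} (p : DWalk A s t) : ddist A f s t ≤ p.len f :=
  csInf_le (ddist_bddBelow hNoNeg s t) ⟨p, rfl⟩

lemma le_ddist {s t : V} {c : ℝ} (hst : Nonempty (DWalk A s t))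
    (h : ∀ p : DWalk A s t, c ≤ p.len f) : c ≤ ddist A f s t :=
  le_csInf (let ⟨p⟩ := hst; ⟨_, p, rfl⟩) fun _ ⟨p, hp⟩ => hp ▸ h p

lemma ddist_of_isEmpty {s t : V} (hst : IsEmpty (DWalk A s t)) : ddist A f s t = 0 := by
  have : {x : ℝ | ∃ p : DWalk A s t, p.len f = x} = ∅ :=
    Set.eq_empty_of_forall_notMem fun _ ⟨p, _⟩ => hst.elim p
  rw [ddist, this, Real.sInf_empty]

end Walks

section PlusGraph

variable {V : Type*} {A : V → V → Prop} {Y : Set V} {lam : V → V → ℝ} {lamb : V → ℝ}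

def DWalk.toPlus (Y : Set V) : ∀ {a b : V}, DWalk A a b → DWalk (Aplus A Y) (some a) (some b)
  | _, _, .nil v => .nil (some v)
  | _, _, .cons h p => .cons (show Aplus A Y (some _) (some _) from h) (p.toPlus Y)

@[simp]
lemma DWalk.len_toPlus : ∀ {a b : V} (p : DWalk A a b),
    (p.toPlus Y).len (lamplus lam lamb) = p.len lam
  | _, _, .nil _ => rfl
  | _, _, .cons _ p => by simp only [DWalk.toPlus, DWalk.len, lamplus, p.len_toPlus]

lemma DWalk.exists_len_eq_of_plus :
    ∀ {o₁ o₂ : Option V} (p : DWalk (Aplus A Y) o₁ o₂) {a b : V}, o₁ = some a → o₂ = some b →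
      ∃ q : DWalk A a b, q.len lam = p.len (lamplus lam lamb)
  | _, _, .nil _, _, _, rfl, h => by cases h; exact ⟨.nil _, rfl⟩
  | _, _, .cons (v := none) h _, _, _, rfl, _ => h.elim
  | _, _, .cons (v := some _) h p, _, _, rfl, hb => by
      obtain ⟨q, hq⟩ := p.exists_len_eq_of_plus rfl hb
      exact ⟨.cons h q, by simp only [DWalk.len, lamplus, hq]⟩

lemma DWalk.eq_none_of_plus_to_none :
    ∀ {o₁ o₂ : Option V}, DWalk (Aplus A Y) o₁ o₂ → o₂ = none → o₁ = none
  | _, _, .nil _, h => h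
  | none, _, .cons _ _, _ => rfl
  | some _, _, .cons (v := none) h _, _ => h.elim
  | some _, _, .cons (v := some _) _ p, h => nomatch p.eq_none_of_plus_to_none h

lemma DWalk.exists_len_eq_lamb_add_of_plus {u : V} :
    ∀ p : DWalk (Aplus A Y) none (some u), ∃ y ∈ Y, ∃ p' : DWalk (Aplus A Y) (some y) (some u),
      p.len (lamplus lam lamb) = lamb y + p'.len (lamplus lam lamb)
  | .cons (v := none) h _ => h.elim
  | .cons (v := some y) h p' => ⟨y, h, p', rfl⟩

lemma plus_noNegCycle (hNoNeg : ∀ (v : V) (c : DWalk A v v), 0 ≤ c.len lam) :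
    ∀ (o : Option V) (c : DWalk (Aplus A Y) o o), 0 ≤ c.len (lamplus lam lamb)
  | none, .nil _ => le_rfl
  | none, .cons (v := none) h _ => h.elim
  | none, .cons (v := some _) _ p => nomatch p.eq_none_of_plus_to_none rfl
  | some a, c => by
      obtain ⟨q, hq⟩ := c.exists_len_eq_of_plus (lam := lam) (lamb := lamb) rfl rfl
      exact hq ▸ hNoNeg a q

end PlusGraph

section Cells

variable {V : Type*} {A : V → V → Prop} {lam : V → V → ℝ} {Y : Finset V} {lamb : V → ℝ}

lemma ddist_plus_none_eq_inf' [Finite V] (hNoNeg : ∀ (v : V) (c : DWalk A v v), 0 ≤ c.len lam)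
    (hreach : ∀ y ∈ Y, ∀ u : V, Nonempty (DWalk A y u)) (hY : Y.Nonempty) (u : V) :
    ddist (Aplus A ↑Y) (lamplus lam lamb) none (some u)
      = Y.inf' hY fun y => lamb y + ddist A lam y u := by
  apply le_antisymm
  · obtain ⟨y, hy, hmin⟩ := Y.exists_mem_eq_inf' hY fun y => lamb y + ddist A lam y u
    rw [hmin]
    suffices ddist (Aplus A ↑Y) (lamplus lam lamb) none (some u) - lamb y ≤ ddist A lam y u by
      linarith
    refine le_ddist (hreach y hy u) fun p => ?_
    have := ddist_le_len_s14 (plus_noNegCycle (lamb := lamb) hNoNeg)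
      (.cons (show Aplus A ↑Y none (some y) from hy) (p.toPlus ↑Y))
    simp only [DWalk.len, lamplus, DWalk.len_toPlus] at this
    linarith
  · obtain ⟨y, hy⟩ := hY
    refine le_ddist ⟨.cons (show Aplus A ↑Y none (some y) from hy) ((hreach y hy u).some.toPlus ↑Y)⟩
      fun p => ?_
    obtain ⟨y', hy', p', hp⟩ := p.exists_len_eq_lamb_add_of_plus
    obtain ⟨q, hq⟩ := p'.exists_len_eq_of_plus rfl rfl
    calc _ ≤ lamb y' + ddist A lam y' u := Finset.inf'_le _ hy'
      _ ≤ lamb y' + q.len lam := by grw [ddist_le_len_s14 hNoNeg q]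
      _ = p.len (lamplus lam lamb) := by rw [hp, hq]

lemma mem_cellY_iff_inf'_eq (hY : Y.Nonempty) {y : V} (hy : y ∈ Y) (u : V) :
    u ∈ cellY A lam Y lamb y
      ↔ (Y.inf' hY fun y' => lamb y' + ddist A lam y' u) = lamb y + ddist A lam y u := by
  refine ⟨fun hu => le_antisymm (Finset.inf'_le _ hy) (Finset.le_inf' _ _ fun y' hy' => ?_),
    fun h y' hy' _ => h ▸ Finset.inf'_le _ hy'⟩
  rcases eq_or_ne y' y with rfl | hne
  · exact le_rfl
  · exact hu y' hy' hne

lemma eq_of_mem_cellY_of_mem_cellY {u y y' : V}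
    (hgen : ∀ y ∈ Y, ∀ y' ∈ Y, y ≠ y' → lamb y + ddist A lam y u ≠ lamb y' + ddist A lam y' u)
    (hy : y ∈ Y) (hy' : y' ∈ Y) (hu : u ∈ cellY A lam Y lamb y)
    (hu' : u ∈ cellY A lam Y lamb y') : y = y' := by
  by_contra hne
  exact hgen y hy y' hy' hne (le_antisymm (hu y' hy' (Ne.symm hne)) (hu' y hy hne))

open Classical in
lemma ddist_plus_none_eq_sum_cellY [Finite V]
    (hNoNeg : ∀ (v : V) (c : DWalk A v v), 0 ≤ c.len lam)
    (hreach : ∀ y ∈ Y, ∀ u : V, Nonempty (DWalk A y u))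
    (hgen : ∀ x : V, ∀ y ∈ Y, ∀ y' ∈ Y, y ≠ y' →
      lamb y + ddist A lam y x ≠ lamb y' + ddist A lam y' x) (u : V) :
    ddist (Aplus A ↑Y) (lamplus lam lamb) none (some u)
      = ∑ y ∈ Y, if u ∈ cellY A lam Y lamb y then lamb y + ddist A lam y u else 0 := by
  rcases Y.eq_empty_or_nonempty with rfl | hY
  · -- with no sites `u` is unreachable from `x₀`, and `ddist` takes the junk value `0`
    refine ddist_of_isEmpty ⟨fun p => ?_⟩
    obtain ⟨y, hy, -⟩ := p.exists_len_eq_lamb_add_of_plus (lam := lam) (lamb := lamb)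
    simp at hy
  obtain ⟨y, hy, hmin⟩ := Y.exists_mem_eq_inf' hY fun y => lamb y + ddist A lam y u
  have hu : u ∈ cellY A lam Y lamb y := (mem_cellY_iff_inf'_eq hY hy u).2 hmin
  rw [Finset.sum_eq_single_of_mem y hy fun y' hy' hne => if_neg fun hu' =>
      hne (eq_of_mem_cellY_of_mem_cellY (hgen u) hy' hy hu' hu),
    if_pos hu, ddist_plus_none_eq_inf' hNoNeg hreach hY, hmin]

end Cells

open Classical in
theorem stmt14_general {V : Type*} [Fintype V] (A : V → V → Prop) (lam : V → V → ℝ)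
    (hNoNeg : ∀ (v : V) (c : DWalk A v v), 0 ≤ DWalk.len lam c)
    (Y : Finset V) (lamb : V → ℝ)
    (hreach : ∀ y ∈ Y, ∀ u : V, Nonempty (DWalk A y u))
    (hgen : ∀ x : V, ∀ y ∈ Y, ∀ y' ∈ Y, y ≠ y' →
      lamb y + ddist A lam y x ≠ lamb y' + ddist A lam y' x)
    (U : Finset V) :
    ∑ u ∈ U, ddist (Aplus A ↑Y) (lamplus lam lamb) none (some u)
      = ∑ y ∈ Y,
          (lamb y * ((U.filter fun u => u ∈ cellY A lam Y lamb y).card : ℝ)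
            + ∑ u ∈ U.filter (fun u => u ∈ cellY A lam Y lamb y),
                ddist A lam y u) := by
  calc
    _ = ∑ u ∈ U, ∑ y ∈ Y,
          if u ∈ cellY A lam Y lamb y then lamb y + ddist A lam y u else 0 :=
        Finset.sum_congr rfl fun u _ => ddist_plus_none_eq_sum_cellY hNoNeg hreach hgen u
    _ = ∑ y ∈ Y, ∑ u ∈ U.filter (fun u => u ∈ cellY A lam Y lamb y),
          (lamb y + ddist A lam y u) := by
        rw [Finset.sum_comm]
        simp only [Finset.sum_filter]
    _ = _ := by
        simp only [Finset.sum_add_distrib, Finset.sum_const, nsmul_eq_mul, mul_comm]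

open Classical in
/-- the sum over `u ∈ U` of `d_{G⁺(Y)}(x₀,u)` decomposes over the
Voronoi cells of the sites `s_y = (y, λ(x₀,y))`, `y ∈ Y`. -/
theorem stmt14 {V : Type*} [Fintype V] (A : V → V → Prop) (lam : V → V → ℝ)
    (hNoNeg : ∀ (v : V) (c : DWalk A v v), 0 ≤ DWalk.len lam c)
    (Y : Finset V) (lamb : V → ℝ)
    (hcond : ∀ y ∈ Y, ∀ y' ∈ Y, y ≠ y' → lamb y < lamb y' + ddist A lam y' y)
    (hreach : ∀ y ∈ Y, ∀ u : V, Nonempty (DWalk A y u))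
    (hgen : ∀ x : V, ∀ y ∈ Y, ∀ y' ∈ Y, y ≠ y' →
      lamb y + ddist A lam y x ≠ lamb y' + ddist A lam y' x)
    (U : Finset V) :
    ∑ u ∈ U, ddist (Aplus A ↑Y) (lamplus lam lamb) none (some u)
      = ∑ y ∈ Y,
          (lamb y * ((U.filter fun u => u ∈ cellY A lam Y lamb y).card : ℝ)
            + ∑ u ∈ U.filter (fun u => u ∈ cellY A lam Y lamb y),
                ddist A lam y u) :=
  stmt14_general A lam hNoNeg Y lamb hreach hgen U
end
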